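/- arXiv:0806.2101 — 5 statements merged into one kernel-verified Lean document; each statement's English description precedes it below -/
import Mathlib

section
/- Let R : {±1}^n → D({±1}^m) be a μ-average (q,c,ε)-randomized smooth code. Then there exists a fixed (deterministic) code C : {±1}^n → {±1}^m which is a μ-average (q,c,ε/2)-smooth code for at least εn of the n indices i, i.e., the decoder's μ-average success probability on index i is at least 1/2 + ε/2 for at least εn indices. -/
open Finset
open scoped Classical

/-!
Write `f z i` for the `μ`-average success probability on index `i` of the code `R(·, z)`.
Averaging the hypothesis over `i` and exchanging sums, the `ζ`-average of `∑ i, f z i` is at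
least `n (1/2 + ε)`, so some seed `z` does at least as well. Since `f z i ≤ 1`, the sum
`∑ i, f z i` is at most `(1/2 + ε/2) n + (1/2 - ε/2) k`, where `k` counts the indices with
`f z i ≥ 1/2 + ε/2`; comparing the two bounds gives `ε n ≤ (1 - ε) k ≤ k`.
-/

theorem Finset.exists_le_of_le_sum_mul {ι : Type*} {s : Finset ι} {w g : ι → ℝ} {c : ℝ}
    (hw₀ : ∀ i ∈ s, 0 ≤ w i) (hw₁ : ∑ i ∈ s, w i = 1) (h : c ≤ ∑ i ∈ s, w i * g i) :
    ∃ i ∈ s, c ≤ g i := by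
  have hs : s.Nonempty := nonempty_of_sum_ne_zero (by rw [hw₁]; exact one_ne_zero)
  obtain ⟨j, hj, hmax⟩ := s.exists_max_image g hs
  refine ⟨j, hj, h.trans ?_⟩
  calc ∑ i ∈ s, w i * g i ≤ ∑ i ∈ s, w i * g j :=
        sum_le_sum fun i hi => mul_le_mul_of_nonneg_left (hmax i hi) (hw₀ i hi)
    _ = g j := by rw [← sum_mul, hw₁, one_mul]

theorem Finset.sum_le_mul_card_add_mul_card_filter_le {ι : Type*} {s : Finset ι} {f : ι → ℝ}
    (t : ℝ) (hf : ∀ i ∈ s, f i ≤ 1) :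
    ∑ i ∈ s, f i ≤ t * #s + (1 - t) * #{i ∈ s | t ≤ f i} := by
  have hgood : ∑ i ∈ s with t ≤ f i, f i ≤ #{i ∈ s | t ≤ f i} := by
    calc _ ≤ ∑ i ∈ s with t ≤ f i, (1 : ℝ) :=
          sum_le_sum fun i hi => hf i (mem_filter.mp hi).1
      _ = _ := by rw [sum_const, nsmul_one]
  have hbad : ∑ i ∈ s with ¬t ≤ f i, f i ≤ t * #{i ∈ s | ¬t ≤ f i} := by
    calc _ ≤ ∑ i ∈ s with ¬t ≤ f i, t :=
          sum_le_sum fun i hi => (not_le.mp (mem_filter.mp hi).2).le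
      _ = _ := by rw [sum_const, nsmul_eq_mul, mul_comm]
  have hcard : (#{i ∈ s | t ≤ f i} : ℝ) + #{i ∈ s | ¬t ≤ f i} = #s := by
    exact_mod_cast card_filter_add_card_filter_not (s := s) (fun i => t ≤ f i)
  rw [← sum_filter_add_sum_filter_not s (fun i => t ≤ f i), ← hcard]
  linarith

theorem stmt0_general (n m : ℕ) (ε : ℝ) (hε : 0 < ε)
    (Z : Type) [Fintype Z] (ζ : Z → ℝ)
    (hζ0 : ∀ z, 0 ≤ ζ z) (hζ1 : ∑ z, ζ z = 1)
    (μ : (Fin n → Bool) → ℝ) (hμ0 : ∀ x, 0 ≤ μ x) (hμ1 : ∑ x, μ x = 1)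
    (R : (Fin n → Bool) → Z → (Fin m → Bool))
    (succ : Fin n → (Fin m → Bool) → (Fin n → Bool) → ℝ)
    (hsucc1 : ∀ i y x, succ i y x ≤ 1)
    (hdec : ∀ i, 1/2 + ε ≤ ∑ x, μ x * ∑ z, ζ z * succ i (R x z) x) :
    ∃ z : Z, ε * n ≤
      ((univ.filter fun i : Fin n =>
        1/2 + ε/2 ≤ ∑ x, μ x * succ i (R x z) x).card : ℝ) := by
  set f : Z → Fin n → ℝ := fun z i => ∑ x, μ x * succ i (R x z) x
  have hf_le_one (z : Z) (i : Fin n) : f z i ≤ 1 :=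
    (sum_le_sum fun x _ => mul_le_of_le_one_right (hμ0 x) (hsucc1 _ _ _)).trans_eq hμ1
  have havg : n * (1/2 + ε) ≤ ∑ z, ζ z * ∑ i, f z i := by
    have hswap (i : Fin n) : ∑ x, μ x * ∑ z, ζ z * succ i (R x z) x = ∑ z, ζ z * f z i := by
      simp only [f, mul_sum]
      rw [sum_comm]
      exact sum_congr rfl fun z _ => sum_congr rfl fun x _ => mul_left_comm _ _ _
    calc n * (1/2 + ε) = ∑ _i : Fin n, (1/2 + ε) := by
          rw [sum_const, card_univ, Fintype.card_fin, nsmul_eq_mul]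
      _ ≤ ∑ i, ∑ z, ζ z * f z i := sum_le_sum fun i _ => (hdec i).trans_eq (hswap i)
      _ = ∑ z, ζ z * ∑ i, f z i := by simp only [mul_sum]; exact sum_comm
  obtain ⟨z, -, hz⟩ := exists_le_of_le_sum_mul (fun z _ => hζ0 z) hζ1 havg
  refine ⟨z, show ε * n ≤ #{i | 1/2 + ε/2 ≤ f z i} from ?_⟩
  have hcount :=
    sum_le_mul_card_add_mul_card_filter_le (s := univ) (1/2 + ε/2) fun i _ => hf_le_one z i
  rw [card_univ, Fintype.card_fin] at hcount
  linarith [mul_nonneg hε.le (#{i | 1/2 + ε/2 ≤ f z i}).cast_nonneg (α := ℝ)]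

/-- A μ-average (q,c,ε)-randomized smooth code `R` (modelled with an
explicit random seed `z ∼ ζ`, decoder success probabilities `succ i y x =
Pr[A^y(i) = x_i]`) can be derandomized: there is a fixed seed `z`, giving the
deterministic code `C = R(·,z)`, whose μ-average success probability on index `i`
is at least `1/2 + ε/2` for at least `ε·n` of the `n` indices.  The decoder (and
hence its query behaviour: at most `q` queries, each position queried with
probability at most `c/m`) is unchanged. -/
theorem stmt0 (n m : ℕ) (ε : ℝ) (hε : 0 < ε)
    (Z : Type) [Fintype Z] (ζ : Z → ℝ)
    (hζ0 : ∀ z, 0 ≤ ζ z) (hζ1 : ∑ z, ζ z = 1)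
    (μ : (Fin n → Bool) → ℝ) (hμ0 : ∀ x, 0 ≤ μ x) (hμ1 : ∑ x, μ x = 1)
    (R : (Fin n → Bool) → Z → (Fin m → Bool))
    (succ : Fin n → (Fin m → Bool) → (Fin n → Bool) → ℝ)
    (hsucc0 : ∀ i y x, 0 ≤ succ i y x) (hsucc1 : ∀ i y x, succ i y x ≤ 1)
    (hdec : ∀ i, 1/2 + ε ≤ ∑ x, μ x * ∑ z, ζ z * succ i (R x z) x) :
    ∃ z : Z, ε * n ≤
      ((univ.filter fun i : Fin n =>
        1/2 + ε/2 ≤ ∑ x, μ x * succ i (R x z) x).card : ℝ) :=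
  stmt0_general n m ε hε Z ζ hζ0 hζ1 μ hμ0 hμ1 R succ hsucc1 hdec
end

section
/- Let H = ([m], E) be a hypergraph whose hyperedges all have size at most q, and let p : E → [0,1] be weights such that (a) Σ_{e∈E} p(e) > ε, and (b) for every vertex j ∈ [m], Σ_{e∈E : j∈e} p(e) ≤ c/m. Then any maximal set M of pairwise-disjoint hyperedges of H has size |M| > εm/(qc). -/
open Finset
open scoped Classical

/-!
By maximality every hyperedge meets the vertex set `T` covered by `M`, and `#T ≤ q #M`.
Charging each hyperedge to a vertex of `T` it contains bounds the total weight by the sum of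
the vertex degrees over `T`: `ε < ∑ p ≤ #T · c/m ≤ q #M · c/m`.
-/

namespace Finset

variable {α β : Type*}

theorem sum_le_sum_sum_filter_mem_of_forall_exists_mem [DecidableEq α] [AddCommMonoid β]
    [PartialOrder β] [IsOrderedAddMonoid β] {E : Finset (Finset α)} {T : Finset α}
    {p : Finset α → β} (hp : ∀ e ∈ E, 0 ≤ p e) (hT : ∀ e ∈ E, ∃ j ∈ T, j ∈ e) :
    ∑ e ∈ E, p e ≤ ∑ j ∈ T, ∑ e ∈ E with j ∈ e, p e := by
  have hcharge : ∀ e ∈ E, p e ≤ ∑ j ∈ T with j ∈ e, p e := fun e he => by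
    obtain ⟨j, hjT, hje⟩ := hT e he
    exact single_le_sum (f := fun _ => p e) (fun _ _ => hp e he) (mem_filter.2 ⟨hjT, hje⟩)
  calc ∑ e ∈ E, p e ≤ ∑ e ∈ E, ∑ j ∈ T with j ∈ e, p e := sum_le_sum hcharge
    _ = ∑ j ∈ T, ∑ e ∈ E with j ∈ e, p e :=
      sum_comm' fun e j => by simp only [mem_filter]; tauto

theorem exists_mem_biUnion_id_mem_of_maximal [DecidableEq α] {M : Finset (Finset α)}
    {e : Finset α} (he : e.Nonempty) (hmax : e ∉ M → ∃ r ∈ M, ¬ Disjoint e r) :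
    ∃ j ∈ M.biUnion id, j ∈ e := by
  by_cases heM : e ∈ M
  · obtain ⟨j, hj⟩ := he
    exact ⟨j, mem_biUnion.2 ⟨e, heM, hj⟩, hj⟩
  · obtain ⟨r, hrM, hr⟩ := hmax heM
    obtain ⟨j, hje, hjr⟩ := not_disjoint_iff.1 hr
    exact ⟨j, mem_biUnion.2 ⟨r, hrM, hjr⟩, hje⟩

end Finset

theorem mul_div_lt_of_pos_of_lt_mul_div {ε c : ℝ} {q k m : ℕ} (hε : 0 < ε)
    (h : ε < q * k * (c / m)) : ε * m / (q * c) < k := by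
  have hpos : 0 < q * k * (c / m) := hε.trans h
  have hq : (q : ℝ) ≠ 0 := by rintro hq; simp [hq] at hpos
  have hm : (0 : ℝ) < m := (m.cast_nonneg).lt_of_ne' <| by rintro hm; simp [hm] at hpos
  have hc : 0 < c := (div_pos_iff_of_pos_right hm).1 (pos_of_mul_pos_right hpos (by positivity))
  rw [div_lt_iff₀ (by positivity)]
  rw [mul_div_assoc', lt_div_iff₀ (by positivity)] at h
  linarith

theorem stmt5_general (m q : ℕ) (ε c : ℝ) (hε : 0 < ε)
    (E : Finset (Finset (Fin m)))
    (hEne : ∀ e ∈ E, e.Nonempty) (hEq : ∀ e ∈ E, e.card ≤ q)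
    (p : Finset (Fin m) → ℝ) (hp0 : ∀ e, 0 ≤ p e)
    (htot : ε < ∑ e ∈ E, p e)
    (hdeg : ∀ j : Fin m, ∑ e ∈ E.filter (fun e => j ∈ e), p e ≤ c / m)
    (M : Finset (Finset (Fin m))) (hME : M ⊆ E)
    (hmax : ∀ e ∈ E, e ∉ M → ∃ r ∈ M, ¬ Disjoint e r) :
    ε * m / (q * c) < (M.card : ℝ) := by
  set T := M.biUnion id
  have hcover : ∀ e ∈ E, ∃ j ∈ T, j ∈ e := fun e he =>
    exists_mem_biUnion_id_mem_of_maximal (hEne e he) (hmax e he)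
  have hT : (T.card : ℝ) ≤ q * M.card := by
    rw [mul_comm]
    exact_mod_cast card_biUnion_le_card_mul M id q fun r hr => hEq r (hME hr)
  have hweight : ε < T.card * (c / m) :=
    calc ε < ∑ e ∈ E, p e := htot
      _ ≤ ∑ j ∈ T, ∑ e ∈ E with j ∈ e, p e :=
        sum_le_sum_sum_filter_mem_of_forall_exists_mem (fun e _ => hp0 e) hcover
      _ ≤ T.card * (c / m) := by
        simpa only [nsmul_eq_mul] using sum_le_card_nsmul T _ _ fun j _ => hdeg j
  have hcm : 0 < c / m := pos_of_mul_pos_right (hε.trans hweight) (Nat.cast_nonneg _)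
  exact mul_div_lt_of_pos_of_lt_mul_div hε (hweight.trans_le (by gcongr))

/-- The hypergraph matching bound (combinatorial core of
Katz–Trevisan's Lemma 4).  `E` is a set of hyperedges on vertex set `[m]`, each
of size at most `q` (and nonempty), with weights `p` such that the total weight
exceeds `ε` while the weight through any single vertex is at most `c/m`.  Then
any maximal pairwise-disjoint subfamily `M ⊆ E` has more than `εm/(qc)`
elements. -/
theorem stmt5 (m q : ℕ) (hm : 0 < m) (hq : 0 < q) (ε c : ℝ) (hε : 0 < ε) (hc : 0 < c)
    (E : Finset (Finset (Fin m)))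
    (hEne : ∀ e ∈ E, e.Nonempty) (hEq : ∀ e ∈ E, e.card ≤ q)
    (p : Finset (Fin m) → ℝ) (hp0 : ∀ e, 0 ≤ p e)
    (htot : ε < ∑ e ∈ E, p e)
    (hdeg : ∀ j : Fin m, ∑ e ∈ E.filter (fun e => j ∈ e), p e ≤ c / m)
    (M : Finset (Finset (Fin m))) (hME : M ⊆ E)
    (hdisj : (M : Set (Finset (Fin m))).Pairwise Disjoint)
    (hmax : ∀ e ∈ E, e ∉ M → ∃ r ∈ M, ¬ Disjoint e r) :
    ε * m / (q * c) < (M.card : ℝ) :=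
  stmt5_general m q ε c hε E hEne hEq p hp0 htot hdeg M hME hmax
end

section
/- Let Q : {±1}^n → D(2^m) be a (q,c,ε)-smooth quantum code with decoder A, and let μ be a distribution on {±1}^n. Then for every i ∈ [n] there exists a family M_i of more than εm/(qc) pairwise-disjoint sets r ⊆ [m], each of size at most q, such that for every r ∈ M_i, Pr_{x∼μ}[A^{Q(x)}(i) = x_i | A(i) queries r] ≥ 1/2 + ε/2. -/
open Finset
open scoped Classical

/-! Averaging over `μ` turns the pointwise guarantee into `1/2 + ε ≤ ∑ r, p r * S r`, where
`S r` is the `μ`-average success of query set `r`. Since `S ≤ 1`, a Markov-type argument shows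
that the query sets with `S r ≥ 1/2 + ε/2` carry `p`-mass more than `ε`. A maximal disjoint
family `M` of these good sets meets every good set, so their mass is at most the total load
`c/m` on the at most `q |M|` positions covered by `M`; hence `ε < (c/m) q |M|`. -/

section WeightedAverage

variable {ι : Type*} [Fintype ι] {w f : ι → ℝ} {a : ℝ}

theorem le_sum_mul_of_forall_le (hw0 : ∀ i, 0 ≤ w i) (hw1 : ∑ i, w i = 1)
    (h : ∀ i, a ≤ f i) : a ≤ ∑ i, w i * f i :=
  calc a = ∑ i, w i * a := by rw [← sum_mul, hw1, one_mul]
    _ ≤ ∑ i, w i * f i := sum_le_sum fun i _ => mul_le_mul_of_nonneg_left (h i) (hw0 i)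

theorem sum_mul_le_of_forall_le (hw0 : ∀ i, 0 ≤ w i) (hw1 : ∑ i, w i = 1)
    (h : ∀ i, f i ≤ a) : ∑ i, w i * f i ≤ a :=
  calc ∑ i, w i * f i ≤ ∑ i, w i * a :=
        sum_le_sum fun i _ => mul_le_mul_of_nonneg_left (h i) (hw0 i)
    _ = a := by rw [← sum_mul, hw1, one_mul]

theorem lt_sum_filter_of_half_add_le_sum_mul {ε : ℝ} (hε : 0 < ε) (hw0 : ∀ i, 0 ≤ w i)
    (hw1 : ∑ i, w i = 1) (hf : ∀ i, f i ≤ 1) (h : 1/2 + ε ≤ ∑ i, w i * f i) :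
    ε < ∑ i ∈ univ.filter (fun i => w i ≠ 0 ∧ 1/2 + ε/2 ≤ f i), w i := by
  set good := fun i => w i ≠ 0 ∧ 1/2 + ε/2 ≤ f i
  have hgood : ∑ i ∈ univ.filter good, w i * f i ≤ ∑ i ∈ univ.filter good, w i :=
    sum_le_sum fun i _ => mul_le_of_le_one_right (hw0 i) (hf i)
  have hbad : ∑ i ∈ univ.filter (¬good ·), w i * f i
      ≤ (1/2 + ε/2) * ∑ i ∈ univ.filter (¬good ·), w i := by
    rw [mul_sum]
    refine sum_le_sum fun i hi => ?_
    by_cases hwi : w i = 0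
    · simp [hwi]
    · have hfi : f i < 1/2 + ε/2 := not_le.1 fun hle => (mem_filter.1 hi).2 ⟨hwi, hle⟩
      nlinarith [hw0 i]
  have hsplit := sum_filter_add_sum_filter_not univ good w
  have hsplit_mul := sum_filter_add_sum_filter_not univ good (fun i => w i * f i)
  have hgood0 : 0 ≤ ∑ i ∈ univ.filter good, w i := sum_nonneg fun i _ => hw0 i
  have hkey : ε ≤ (1 - ε) * ∑ i ∈ univ.filter good, w i := by nlinarith
  show ε < ∑ i ∈ univ.filter good, w i
  nlinarith [mul_nonneg hε.le hgood0]

end WeightedAverage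

section Matching

variable {α : Type*}

theorem exists_pairwise_disjoint_subset_forall_not_disjoint [DecidableEq α]
    (G : Finset (Finset α)) (hG : ∀ g ∈ G, g.Nonempty) :
    ∃ M ⊆ G, (M : Set (Finset α)).Pairwise Disjoint ∧ ∀ g ∈ G, ∃ r ∈ M, ¬Disjoint g r := by
  set T := G.powerset.filter fun M : Finset (Finset α) => (M : Set (Finset α)).Pairwise Disjoint
  obtain ⟨M, hMT, hMmax⟩ := T.exists_max_image card ⟨∅, by simp [T]⟩
  obtain ⟨hMG, hMdisj⟩ := mem_filter.1 hMT
  refine ⟨M, mem_powerset.1 hMG, hMdisj, fun g hg => ?_⟩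
  by_contra! hfree
  have hgM : g ∉ M := fun hgM => (hG g hg).ne_empty (disjoint_self_iff_empty g |>.1 (hfree g hgM))
  have hinsert : insert g M ∈ T := by
    refine mem_filter.2 ⟨mem_powerset.2 (insert_subset hg (mem_powerset.1 hMG)), ?_⟩
    rw [coe_insert, Set.pairwise_insert_of_symm]
    exact ⟨hMdisj, fun r hr _ => hfree r hr⟩
  have := hMmax _ hinsert
  rw [card_insert_of_notMem hgM] at this
  omega

variable [Fintype α] [DecidableEq α]

theorem sum_le_sum_sum_filter_mem_of_forall_inter_nonempty (G : Finset (Finset α))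
    (J : Finset α) (w : Finset α → ℝ) (hw : ∀ r, 0 ≤ w r) (hmeet : ∀ g ∈ G, (J ∩ g).Nonempty) :
    ∑ g ∈ G, w g ≤ ∑ j ∈ J, ∑ r ∈ univ.filter (j ∈ ·), w r :=
  calc ∑ g ∈ G, w g ≤ ∑ g ∈ G, ∑ _j ∈ J ∩ g, w g := sum_le_sum fun g hg => by
        rw [sum_const, nsmul_eq_mul]
        exact le_mul_of_one_le_left (hw g) (by exact_mod_cast (hmeet g hg).card_pos)
    _ = ∑ j ∈ J, ∑ g ∈ G.filter (j ∈ ·), w g :=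
        sum_comm' fun g j => by simp only [mem_inter, mem_filter]; tauto
    _ ≤ ∑ j ∈ J, ∑ r ∈ univ.filter (j ∈ ·), w r := sum_le_sum fun j _ =>
        sum_le_sum_of_subset_of_nonneg (filter_subset_filter _ (subset_univ G)) fun r _ _ => hw r

theorem exists_pairwise_disjoint_subset_sum_le (G : Finset (Finset α)) (q : ℕ)
    (hG : ∀ g ∈ G, g.Nonempty ∧ g.card ≤ q) (w : Finset α → ℝ) (hw : ∀ r, 0 ≤ w r) (δ : ℝ)
    (hload : ∀ j, ∑ r ∈ univ.filter (j ∈ ·), w r ≤ δ) :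
    ∃ M ⊆ G, (M : Set (Finset α)).Pairwise Disjoint ∧ ∑ g ∈ G, w g ≤ δ * (q * M.card) := by
  obtain ⟨M, hMG, hMdisj, hmeet⟩ :=
    exists_pairwise_disjoint_subset_forall_not_disjoint G fun g hg => (hG g hg).1
  refine ⟨M, hMG, hMdisj, ?_⟩
  set J := M.biUnion id
  have hJmeet : ∀ g ∈ G, (J ∩ g).Nonempty := fun g hg => by
    obtain ⟨r, hrM, hgr⟩ := hmeet g hg
    obtain ⟨j, hjg, hjr⟩ := not_disjoint_iff.1 hgr
    exact ⟨j, mem_inter.2 ⟨mem_biUnion.2 ⟨r, hrM, hjr⟩, hjg⟩⟩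
  have hJcard : (J.card : ℝ) ≤ q * M.card := by
    rw [mul_comm]
    exact_mod_cast card_biUnion_le_card_mul M id q fun r hr => (hG r (hMG hr)).2
  have hsum : ∑ g ∈ G, w g ≤ J.card * δ :=
    calc ∑ g ∈ G, w g ≤ ∑ j ∈ J, ∑ r ∈ univ.filter (j ∈ ·), w r :=
          sum_le_sum_sum_filter_mem_of_forall_inter_nonempty G J w hw hJmeet
      _ ≤ ∑ _j ∈ J, δ := sum_le_sum fun j _ => hload j
      _ = J.card * δ := by rw [sum_const, nsmul_eq_mul]
  rcases J.eq_empty_or_nonempty with hJ | ⟨j, -⟩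
  · have hM : M = ∅ := eq_empty_of_forall_notMem fun r hr =>
      (hG r (hMG hr)).1.ne_empty (subset_empty.1 (hJ ▸ subset_biUnion_of_mem id hr))
    simpa [hJ, hM] using hsum
  · have hδ : 0 ≤ δ := (sum_nonneg fun r _ => hw r).trans (hload j)
    nlinarith

end Matching

theorem mul_div_lt_of_lt_mul_div {ε a K m : ℝ} (hε : 0 < ε) (hK : 0 ≤ K) (hm : 0 ≤ m)
    (h : ε < a * K / m) : ε * m / a < K := by
  rcases hm.eq_or_lt with rfl | hm
  · simp only [div_zero] at h
    exact absurd h hε.not_gt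
  rw [lt_div_iff₀ hm] at h
  rcases le_or_gt a 0 with ha | ha
  · nlinarith
  · rwa [div_lt_iff₀ ha, mul_comm K]

theorem stmt6_general (n m q : ℕ) (c ε : ℝ) (hε : 0 < ε)
    (μ : (Fin n → Bool) → ℝ) (hμ0 : ∀ x, 0 ≤ μ x) (hμ1 : ∑ x, μ x = 1)
    (p : Fin n → Finset (Fin m) → ℝ)
    (hp0 : ∀ i r, 0 ≤ p i r) (hp1 : ∀ i, ∑ r, p i r = 1)
    (hpq : ∀ i r, p i r ≠ 0 → r.card ≤ q ∧ r.Nonempty)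
    (hsmooth : ∀ i (j : Fin m), ∑ r ∈ univ.filter (fun r => j ∈ r), p i r ≤ c / m)
    (succ : Fin n → Finset (Fin m) → (Fin n → Bool) → ℝ)
    (hsucc1 : ∀ i r x, succ i r x ≤ 1)
    (hdec : ∀ x i, 1/2 + ε ≤ ∑ r, p i r * succ i r x) :
    ∀ i : Fin n, ∃ M : Finset (Finset (Fin m)),
      ε * m / (q * c) < (M.card : ℝ) ∧
      (∀ r ∈ M, r.card ≤ q) ∧
      (M : Set (Finset (Fin m))).Pairwise Disjoint ∧
      ∀ r ∈ M, 1/2 + ε/2 ≤ ∑ x, μ x * succ i r x := by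
  intro i
  set S := fun r => ∑ x, μ x * succ i r x
  have hS1 : ∀ r, S r ≤ 1 := fun r => sum_mul_le_of_forall_le hμ0 hμ1 (hsucc1 i r)
  have havg : 1/2 + ε ≤ ∑ r, p i r * S r := by
    have hswap : ∑ r, p i r * S r = ∑ x, μ x * ∑ r, p i r * succ i r x := by
      simp only [S, mul_sum]
      rw [sum_comm]
      exact sum_congr rfl fun _ _ => sum_congr rfl fun _ _ => mul_left_comm _ _ _
    exact hswap ▸ le_sum_mul_of_forall_le hμ0 hμ1 fun x => hdec x i
  set Good := univ.filter fun r => p i r ≠ 0 ∧ 1/2 + ε/2 ≤ S r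
  have hGood : ∀ r ∈ Good, p i r ≠ 0 ∧ 1/2 + ε/2 ≤ S r := fun r hr => (mem_filter.1 hr).2
  have hmass : ε < ∑ r ∈ Good, p i r :=
    lt_sum_filter_of_half_add_le_sum_mul hε (hp0 i) (hp1 i) hS1 havg
  obtain ⟨M, hMG, hMdisj, hbound⟩ := exists_pairwise_disjoint_subset_sum_le Good q
    (fun r hr => (hpq i r (hGood r hr).1).symm) (p i) (hp0 i) (c / m) (hsmooth i)
  refine ⟨M, mul_div_lt_of_lt_mul_div hε M.card.cast_nonneg m.cast_nonneg ?_,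
    fun r hr => (hpq i r (hGood r (hMG hr)).1).1, hMdisj, fun r hr => (hGood r (hMG hr)).2⟩
  calc ε < c / m * (q * M.card) := hmass.trans_le hbound
    _ = q * c * M.card / m := by ring

/-- Katz–Trevisan matching lemma for smooth quantum codes
(Theorem 4.2 of the paper).  The decoder of a (q,c,ε)-smooth quantum code on
input `i` selects a query set `r` with probability `p i r` (nonempty, of size
at most `q`; each position `j` selected with probability at most `c/m`) and
measures it; `succ i r x ∈ [0,1]` denotes the conditional probability of
outputting `x_i` on state `Q(x)` given query set `r`, and the overall success
probability is at least `1/2 + ε` for every `x` and `i`.  Then for every `i`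
there is a family `M` of more than `εm/(qc)` pairwise-disjoint sets of size at
most `q`, each of which predicts `x_i` with μ-average conditional success
probability at least `1/2 + ε/2`. -/
theorem stmt6 (n m q : ℕ) (hm : 0 < m) (hq : 0 < q) (c ε : ℝ) (hc : 0 < c) (hε : 0 < ε)
    (μ : (Fin n → Bool) → ℝ) (hμ0 : ∀ x, 0 ≤ μ x) (hμ1 : ∑ x, μ x = 1)
    (p : Fin n → Finset (Fin m) → ℝ)
    (hp0 : ∀ i r, 0 ≤ p i r) (hp1 : ∀ i, ∑ r, p i r = 1)
    (hpq : ∀ i r, p i r ≠ 0 → r.card ≤ q ∧ r.Nonempty)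
    (hsmooth : ∀ i (j : Fin m), ∑ r ∈ univ.filter (fun r => j ∈ r), p i r ≤ c / m)
    (succ : Fin n → Finset (Fin m) → (Fin n → Bool) → ℝ)
    (hsucc0 : ∀ i r x, 0 ≤ succ i r x) (hsucc1 : ∀ i r x, succ i r x ≤ 1)
    (hdec : ∀ x i, 1/2 + ε ≤ ∑ r, p i r * succ i r x) :
    ∀ i : Fin n, ∃ M : Finset (Finset (Fin m)),
      ε * m / (q * c) < (M.card : ℝ) ∧
      (∀ r ∈ M, r.card ≤ q) ∧
      (M : Set (Finset (Fin m))).Pairwise Disjoint ∧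
      ∀ r ∈ M, 1/2 + ε/2 ≤ ∑ x, μ x * succ i r x :=
  stmt6_general n m q c ε hε μ hμ0 hμ1 p hp0 hp1 hpq hsmooth succ hsucc1 hdec
end

section
/- Let C : {±1}^n → {±1}^m be a code with a decoder A such that for every x and i, Pr[A^{C(x)}(i) = x_i] ≥ 1/2 + ε, and suppose for each i there is a family M'_i of exactly m/q pairwise-disjoint q-subsets of [m] partitioning [m], of which a subfamily M_i with |M_i| ≥ εm/(qc) consists of sets r with conditional success probability ≥ 1/2 + ε/2 under μ. Consider the decoder B that on input i picks r uniformly from M'_i, outputs the decoder's prediction if r ∈ M_i, and outputs a uniformly random ±1 bit otherwise. Then B queries each index j ∈ [m] with probability exactly q/m, and its μ-average success probability on each index i is at least 1/2 + ε²/(2c). -/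
open Finset

/-!
Each index `j` lies in exactly one block of the partition `M' i`, so a uniformly chosen block
contains `j` with probability `1 / (m/q) = q/m`.  For the success probability, the good blocks
(a fraction at least `ε/c` of all blocks) each succeed with probability `1/2 + ε/2` and the other
blocks with probability `1/2`, so on average `B` succeeds with probability at least
`1/2 + (ε/c)(ε/2)`.
-/

theorem card_filter_mem_eq_one_of_pairwise_disjoint {α : Type*} [DecidableEq α]
    {P : Finset (Finset α)} (hdisj : (P : Set (Finset α)).Pairwise Disjoint) {j : α}
    (hcover : ∃ r ∈ P, j ∈ r) : (P.filter (fun r => j ∈ r)).card = 1 := by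
  obtain ⟨r, hr, hjr⟩ := hcover
  refine card_eq_one.mpr ⟨r, ext fun s => ⟨fun hs => ?_, fun hs => ?_⟩⟩
  · obtain ⟨hsP, hjs⟩ := mem_filter.mp hs
    by_contra hne
    exact disjoint_left.mp (hdisj hsP hr (mt mem_singleton.mpr hne)) hjs hjr
  · rw [mem_singleton.mp hs]
    exact mem_filter.mpr ⟨hr, hjr⟩

theorem sum_mul_const_mul_sum_ite {α ι : Type*} [Fintype α] [DecidableEq ι]
    {μ : α → ℝ} (hμ : ∑ x, μ x = 1) (P G : Finset ι) (f : ι → α → ℝ) (a b : ℝ) :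
    ∑ x, μ x * (a * ∑ r ∈ P, if r ∈ G then f r x else b)
      = a * ∑ r ∈ P, if r ∈ G then ∑ x, μ x * f r x else b := by
  simp only [mul_sum]
  rw [sum_comm]
  refine sum_congr rfl fun r _ => ?_
  simp only [mul_left_comm _ a]
  rw [← mul_sum]
  split_ifs
  · rfl
  · rw [← sum_mul, hμ, one_mul]

theorem card_mul_add_card_mul_le_sum_ite {ι : Type*} [DecidableEq ι] {P G : Finset ι}
    (hGP : G ⊆ P) {s : ι → ℝ} {b δ : ℝ} (hs : ∀ r ∈ G, b + δ ≤ s r) :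
    P.card * b + G.card * δ ≤ ∑ r ∈ P, if r ∈ G then s r else b :=
  calc P.card * b + G.card * δ = ∑ r ∈ P, (b + if r ∈ G then δ else 0) := by
        rw [sum_add_distrib, sum_const, sum_ite_mem, inter_eq_right.mpr hGP, sum_const,
          nsmul_eq_mul, nsmul_eq_mul]
    _ ≤ ∑ r ∈ P, if r ∈ G then s r else b := sum_le_sum fun r _ => by
        split_ifs with hr
        · exact hs r hr
        · simp

theorem stmt15_general (n m q : ℕ) (hq : 0 < q) (hm : 0 < m) (hqm : q ∣ m)
    (c ε : ℝ) (hc : 0 < c) (hε : 0 < ε)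
    (μ : (Fin n → Bool) → ℝ) (hμ1 : ∑ x, μ x = 1)
    (M' M : Fin n → Finset (Finset (Fin m)))
    (hpartcard : ∀ i, (M' i).card = m / q)
    (hdisj : ∀ i, ((M' i : Set (Finset (Fin m)))).Pairwise Disjoint)
    (hcover : ∀ i, ∀ j : Fin m, ∃ r ∈ M' i, j ∈ r)
    (hsub : ∀ i, M i ⊆ M' i)
    (hMcard : ∀ i, ε * m / (q * c) ≤ ((M i).card : ℝ))
    (succ : Fin n → Finset (Fin m) → (Fin n → Bool) → ℝ)
    (hgood : ∀ i, ∀ r ∈ M i, 1/2 + ε/2 ≤ ∑ x, μ x * succ i r x) :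
    (∀ i (j : Fin m),
      (((M' i).filter (fun r => j ∈ r)).card : ℝ) / ((M' i).card : ℝ)
        = (q : ℝ) / m) ∧
    (∀ i, 1/2 + ε^2 / (2*c) ≤
      ∑ x, μ x * ((1 / ((M' i).card : ℝ)) *
        ∑ r ∈ M' i, (if r ∈ M i then succ i r x else 1/2))) := by
  have hN : ∀ i, ((M' i).card : ℝ) = m / q := fun i => by
    rw [hpartcard, Nat.cast_div_charZero hqm]
  refine ⟨fun i j => ?_, fun i => ?_⟩
  · rw [card_filter_mem_eq_one_of_pairwise_disjoint (hdisj i) (hcover i j), hN, Nat.cast_one,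
      one_div_div]
  rw [sum_mul_const_mul_sum_ite hμ1]
  have hNi := hN i
  set N : ℝ := ((M' i).card : ℝ)
  have hN0 : 0 < N := by rw [hNi]; positivity
  have hK : ε * N / c ≤ (M i).card := by rw [hNi, mul_div_assoc', div_div]; exact hMcard i
  calc 1/2 + ε^2 / (2*c) = 1 / N * (N * (1/2) + ε * N / c * (ε/2)) := by field_simp
    _ ≤ 1 / N * (N * (1/2) + (M i).card * (ε/2)) := by gcongr
    _ ≤ _ := by gcongr; exact card_mul_add_card_mul_le_sum_ite (hsub i) (hgood i)

/-- From a matching to a perfectly smooth decoder.  For each `i`,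
`M' i` is a partition of `[m]` into exactly `m/q` disjoint sets of size `q`,
and `M i ⊆ M' i` is a subfamily of at least `εm/(qc)` sets whose conditional
μ-average success probability `∑ x, μ x * succ i r x` is at least `1/2 + ε/2`.
The decoder `B` picks `r` uniformly from `M' i`, uses the original decoder if
`r ∈ M i`, and outputs a fair coin flip otherwise.  Then `B` queries each index
`j` with probability exactly `q/m`, and its μ-average success probability on
each index `i` is at least `1/2 + ε²/(2c)`. -/
theorem stmt15 (n m q : ℕ) (hq : 0 < q) (hm : 0 < m) (hqm : q ∣ m)
    (c ε : ℝ) (hc : 0 < c) (hε : 0 < ε)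
    (μ : (Fin n → Bool) → ℝ) (hμ0 : ∀ x, 0 ≤ μ x) (hμ1 : ∑ x, μ x = 1)
    (M' M : Fin n → Finset (Finset (Fin m)))
    (hpartcard : ∀ i, (M' i).card = m / q)
    (hsize : ∀ i, ∀ r ∈ M' i, r.card = q)
    (hdisj : ∀ i, ((M' i : Set (Finset (Fin m)))).Pairwise Disjoint)
    (hcover : ∀ i, ∀ j : Fin m, ∃ r ∈ M' i, j ∈ r)
    (hsub : ∀ i, M i ⊆ M' i)
    (hMcard : ∀ i, ε * m / (q * c) ≤ ((M i).card : ℝ))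
    (succ : Fin n → Finset (Fin m) → (Fin n → Bool) → ℝ)
    (hsucc0 : ∀ i r x, 0 ≤ succ i r x) (hsucc1 : ∀ i r x, succ i r x ≤ 1)
    (hgood : ∀ i, ∀ r ∈ M i, 1/2 + ε/2 ≤ ∑ x, μ x * succ i r x) :
    (∀ i (j : Fin m),
      (((M' i).filter (fun r => j ∈ r)).card : ℝ) / ((M' i).card : ℝ)
        = (q : ℝ) / m) ∧
    (∀ i, 1/2 + ε^2 / (2*c) ≤
      ∑ x, μ x * ((1 / ((M' i).card : ℝ)) *
        ∑ r ∈ M' i, (if r ∈ M i then succ i r x else 1/2))) :=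
  stmt15_general n m q hq hm hqm c ε hc hε μ hμ1 M' M hpartcard hdisj hcover hsub hMcard succ hgood
end

section
/- Let C : {±1}^n → {±1}^m be a (q,c,ε)-smooth code (worst-case over all x). Then there exists a decoder B such that: (1) for every x ∈ {±1}^n and every i ∈ [n], Pr[B^{C(x)}(i) = x_i] ≥ 1/2 + ε²/(2c); and (2) for every i and j ∈ [m], B(i) queries index j with probability exactly q/m. That is, C is a (q,q,ε²/(2c))-smooth code with perfectly uniform queries. -/
open Finset
open scoped Classical

/-!
No minimax argument is needed; the uniform decoder is built explicitly. First each query set `s`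
(of size at most `q`) is padded to a random `q`-set containing it, adding each `j ∉ s` with
probability `(q - |s|)/(m - |s|)`. This keeps the success probability and, by smoothness, leaves
every position queried with probability at most `(c + q)/m`. Then, for `β = ε/(2c)`, the padded
decoder is run with probability `β`; otherwise the decoder queries a random `q`-set, chosen so
that every position is queried with total probability exactly `q/m`, and answers with a fair
coin. The success probability becomes `β (1/2 + ε) + (1 - β)/2 = 1/2 + ε²/(2c)`.

A random `q`-set with prescribed inclusion probabilities in `[0, 1]` exists by the
Birkhoff–von Neumann theorem. The residual probabilities lie in `[0, 1]` because `2ε ≤ c`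
(flipping `x_i` moves the success probability by `2ε`, but the decoder only notices the flip
through queried positions where the two codewords differ, hit with probability at most `c`) and
because `q ∣ m` forces `q = m` or `2q ≤ m`.
-/

section PushWeights

variable {Ω β : Type*} [Fintype Ω] [DecidableEq β] (ρ : Ω → ℝ) (f : Ω → β)

noncomputable def pushWeights (b : β) : ℝ := ∑ ω ∈ univ.filter (fun ω => f ω = b), ρ ω

variable {ρ}

lemma pushWeights_nonneg (hρ : ∀ ω, 0 ≤ ρ ω) (b : β) : 0 ≤ pushWeights ρ f b :=
  sum_nonneg fun ω _ => hρ ω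

lemma sum_filter_pushWeights [Fintype β] (P : β → Prop) [DecidablePred P] :
    ∑ b ∈ univ.filter P, pushWeights ρ f b = ∑ ω ∈ univ.filter (fun ω => P (f ω)), ρ ω := by
  rw [← sum_fiberwise_of_maps_to (g := f) (t := univ.filter P) (fun ω hω => by simpa using hω)]
  refine sum_congr rfl fun b hb => ?_
  rw [pushWeights, filter_filter]
  congr 1
  ext ω
  simp only [mem_filter, mem_univ, true_and] at hb ⊢
  exact ⟨fun h => ⟨h ▸ hb, h⟩, fun h => h.2⟩

lemma sum_pushWeights [Fintype β] : ∑ b, pushWeights ρ f b = ∑ ω, ρ ω :=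
  sum_fiberwise univ f ρ

lemma exists_of_pushWeights_ne_zero {b : β} (h : pushWeights ρ f b ≠ 0) :
    ∃ ω, f ω = b ∧ ρ ω ≠ 0 := by
  obtain ⟨ω, hω, hρω⟩ := exists_ne_zero_of_sum_ne_zero h
  exact ⟨ω, (mem_filter.1 hω).2, hρω⟩

end PushWeights

lemma mul_div_cancel_of_sum_eq {ι : Type*} [Fintype ι] {g : ι → ℝ} {N : ℝ}
    (hg : ∀ i, 0 ≤ g i) (hN : ∑ i, g i = N) (i : ι) : N * (g i / N) = g i := by
  rcases eq_or_ne N 0 with rfl | hN0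
  · rw [(sum_eq_zero_iff_of_nonneg fun i _ => hg i).1 hN i (mem_univ i)]
    simp
  · exact mul_div_cancel₀ _ hN0

section FiniteGround

variable {α : Type*} [Fintype α]

lemma cast_card_lt_of_notMem {s : Finset α} {j : α} (hj : j ∉ s) :
    (s.card : ℝ) < Fintype.card α := by
  exact_mod_cast card_lt_univ_of_notMem hj

variable [DecidableEq α]

section Birkhoff

variable {q : ℕ} {t : α → ℝ}

noncomputable def marginalMatrix (K : Finset α) (q : ℕ) (t : α → ℝ) : Matrix α α ℝ :=
  fun k j => if k ∈ K then t j / q else (1 - t j) / (Fintype.card α - q)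

lemma marginalMatrix_mem_doublyStochastic {K : Finset α} (hK : K.card = q)
    (h0 : ∀ j, 0 ≤ t j) (h1 : ∀ j, t j ≤ 1) (hsum : ∑ j, t j = q) :
    marginalMatrix K q t ∈ doublyStochastic ℝ α := by
  have hcompl : ∑ j, (1 - t j) = (Fintype.card α - q : ℝ) := by
    simp [sum_sub_distrib, hsum]
  have hK' : ((Kᶜ).card : ℝ) = Fintype.card α - q := by
    rw [card_compl, Nat.cast_sub (hK ▸ card_le_univ K), hK]
  rw [mem_doublyStochastic_iff_sum]
  refine ⟨fun k j => ?_, fun k => ?_, fun j => ?_⟩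
  · unfold marginalMatrix
    split_ifs
    · exact div_nonneg (h0 j) (Nat.cast_nonneg q)
    · exact div_nonneg (sub_nonneg.2 (h1 j)) (by rw [← hK']; positivity)
  · unfold marginalMatrix
    split_ifs with hk
    · have : (q : ℝ) ≠ 0 := by rw [← hK]; exact_mod_cast (card_pos.2 ⟨k, hk⟩).ne'
      rw [← sum_div, hsum, div_self this]
    · have : (Fintype.card α - q : ℝ) ≠ 0 := by
        rw [← hK']; exact_mod_cast (card_pos.2 ⟨k, mem_compl.2 hk⟩).ne'
      rw [← sum_div, hcompl, div_self this]
  · rw [← sum_add_sum_compl K]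
    unfold marginalMatrix
    rw [sum_congr rfl fun k hk => if_pos hk, sum_congr rfl fun k hk => if_neg (mem_compl.1 hk)]
    simp only [sum_const, nsmul_eq_mul, hK, hK']
    rw [mul_div_cancel_of_sum_eq h0 hsum,
      mul_div_cancel_of_sum_eq (fun j => sub_nonneg.2 (h1 j)) hcompl]
    ring

/-- The random `q`-set is `σ '' K` for a random permutation `σ` drawn from a Birkhoff
decomposition of `marginalMatrix K q t`. -/
theorem exists_weights_card_eq (h0 : ∀ j, 0 ≤ t j) (h1 : ∀ j, t j ≤ 1) (hsum : ∑ j, t j = q) :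
    ∃ w : Finset α → ℝ, (∀ r, 0 ≤ w r) ∧ ∑ r, w r = 1 ∧ (∀ r, w r ≠ 0 → r.card = q) ∧
      ∀ j, ∑ r ∈ univ.filter (fun r => j ∈ r), w r = t j := by
  have hq : q ≤ (univ : Finset α).card := by
    have : ∑ j, t j ≤ ∑ _j : α, (1 : ℝ) := sum_le_sum fun j _ => h1 j
    rw [hsum] at this
    exact_mod_cast (by simpa using this)
  obtain ⟨K, -, hK⟩ := exists_subset_card_eq hq
  obtain ⟨μ, hμ0, hμ1, hμM⟩ :=
    exists_eq_sum_perm_of_mem_doublyStochastic (marginalMatrix_mem_doublyStochastic hK h0 h1 hsum)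
  refine ⟨pushWeights μ fun σ => K.map σ.toEmbedding, pushWeights_nonneg _ hμ0,
    by rw [sum_pushWeights, hμ1], fun r hr => ?_, fun j => ?_⟩
  · obtain ⟨σ, rfl, -⟩ := exists_of_pushWeights_ne_zero _ hr
    rw [card_map, hK]
  · have hperm : ∀ σ : Equiv.Perm α, ∑ k ∈ K, Equiv.Perm.permMatrix ℝ σ k j =
        if j ∈ K.map σ.toEmbedding then 1 else 0 := by
      intro σ
      simp only [Equiv.Perm.permMatrix, PEquiv.toMatrix_apply, Equiv.toPEquiv_apply,
        Option.mem_def, Option.some.injEq, sum_boole, mem_map_equiv, ← Equiv.eq_symm_apply]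
      split_ifs with h
      · exact Nat.cast_eq_one.2 (card_eq_one.2 ⟨σ.symm j, by ext x; simpa using fun hx => hx ▸ h⟩)
      · simp [h]
    calc ∑ r ∈ univ.filter (fun r => j ∈ r), pushWeights μ (fun σ => K.map σ.toEmbedding) r
        = ∑ σ, μ σ * ∑ k ∈ K, Equiv.Perm.permMatrix ℝ σ k j := by
          rw [sum_filter_pushWeights, sum_filter]
          exact sum_congr rfl fun σ _ => by rw [hperm, mul_ite, mul_one, mul_zero]
      _ = ∑ k ∈ K, marginalMatrix K q t k j := by
          simp only [← hμM, Matrix.sum_apply, Matrix.smul_apply, smul_eq_mul, mul_sum]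
          exact sum_comm
      _ = t j := by
          rw [sum_congr rfl fun k hk => (show marginalMatrix K q t k j = t j / q from if_pos hk),
            sum_const, hK, nsmul_eq_mul,
            mul_div_cancel_of_sum_eq h0 hsum]

end Birkhoff

lemma mem_of_sum_filter_mem_eq_one {w : Finset α → ℝ} (h0 : ∀ r, 0 ≤ w r) (h1 : ∑ r, w r = 1)
    {j : α} (hj : ∑ r ∈ univ.filter (fun r => j ∈ r), w r = 1) {r : Finset α} (hr : w r ≠ 0) :
    j ∈ r := by
  by_contra hjr
  have hzero : ∑ r ∈ univ.filter (fun r => j ∉ r), w r = 0 := by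
    linarith [sum_filter_add_sum_filter_not univ (fun r => j ∈ r) w]
  exact hr ((sum_eq_zero_iff_of_nonneg fun r _ => h0 r).1 hzero r (by simpa using hjr))

section Padding

variable {q : ℕ} {s : Finset α} {j : α}

/-- The probability that a uniformly random `q`-element superset of `s` contains `j`. -/
noncomputable def padProb (q : ℕ) (s : Finset α) (j : α) : ℝ :=
  if j ∈ s then 1 else (q - s.card) / (Fintype.card α - s.card)

lemma padProb_nonneg (hs : s.card ≤ q) (j : α) : 0 ≤ padProb q s j := by
  unfold padProb
  split_ifs with hj
  · exact zero_le_one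
  · have : (s.card : ℝ) ≤ q := by exact_mod_cast hs
    exact div_nonneg (by linarith) (by linarith [cast_card_lt_of_notMem hj])

lemma padProb_le_one (hq : q ≤ Fintype.card α) (j : α) : padProb q s j ≤ 1 := by
  unfold padProb
  split_ifs with hj
  · exact le_rfl
  · have : (q : ℝ) ≤ Fintype.card α := by exact_mod_cast hq
    rw [div_le_one (by linarith [cast_card_lt_of_notMem hj])]
    linarith

lemma padProb_le (hs : s.card ≤ q) (hq : q ≤ Fintype.card α) (j : α) :
    padProb q s j ≤ (if j ∈ s then 1 else 0) + q / Fintype.card α := by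
  unfold padProb
  split_ifs with hj
  · have : (0 : ℝ) ≤ q / Fintype.card α := by positivity
    linarith
  · have hk := cast_card_lt_of_notMem hj
    have : (s.card : ℝ) ≤ q := by exact_mod_cast hs
    have : (q : ℝ) ≤ Fintype.card α := by exact_mod_cast hq
    rw [zero_add, div_le_div_iff₀ (by linarith) (by linarith)]
    nlinarith [Nat.cast_nonneg (α := ℝ) s.card]

lemma padProb_of_eq_card (hq : q = Fintype.card α) (j : α) : padProb q s j = 1 := by
  unfold padProb
  split_ifs with hj
  · rfl
  · rw [hq, div_self (by linarith [cast_card_lt_of_notMem hj])]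

lemma sum_padProb (hs : s.card ≤ q) (hq : q ≤ Fintype.card α) : ∑ j, padProb q s j = q := by
  rcases eq_or_ne s univ with rfl | hsu
  · have : q = Fintype.card α := le_antisymm hq (by simpa using hs)
    simp [padProb, this]
  have hk : (s.card : ℝ) < Fintype.card α := by
    exact_mod_cast card_lt_card (ssubset_univ_iff.2 hsu)
  rw [← sum_add_sum_compl s, sum_congr rfl fun j hj => (show padProb q s j = 1 from if_pos hj),
    sum_congr rfl fun j hj => (show padProb q s j = _ from if_neg (mem_compl.1 hj))]
  simp only [sum_const, card_compl, nsmul_eq_mul, mul_one, Nat.cast_sub (card_le_univ s)]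
  rw [mul_div_cancel₀ _ (by linarith)]
  ring

theorem exists_padding (hs : s.card ≤ q) (hq : q ≤ Fintype.card α) :
    ∃ w : Finset α → ℝ, (∀ r, 0 ≤ w r) ∧ ∑ r, w r = 1 ∧
      (∀ r, w r ≠ 0 → r.card = q ∧ s ⊆ r) ∧
      ∀ j, ∑ r ∈ univ.filter (fun r => j ∈ r), w r = padProb q s j := by
  obtain ⟨w, hw0, hw1, hwcard, hwj⟩ := exists_weights_card_eq (padProb_nonneg hs)
    (padProb_le_one hq) (sum_padProb hs hq)
  refine ⟨w, hw0, hw1, fun r hr => ⟨hwcard r hr, fun j hj => ?_⟩, hwj⟩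
  exact mem_of_sum_filter_mem_eq_one hw0 hw1 ((hwj j).trans (if_pos hj)) hr

end Padding

lemma exists_weights_complement {q : ℕ} {c β : ℝ} {S : α → ℝ}
    (hsize : q = Fintype.card α ∨ 2 * q ≤ Fintype.card α) (hS0 : ∀ j, 0 ≤ S j)
    (hS : ∀ j, S j ≤ (c + q) / Fintype.card α) (hSsum : ∑ j, S j = q)
    (hS1 : q = Fintype.card α → ∀ j, S j = 1)
    (hβ0 : 0 ≤ β) (hβ : β ≤ 1 / 2) (hβc : β * (c + q) ≤ q) :
    ∃ Q : Finset α → ℝ, (∀ r, 0 ≤ Q r) ∧ ∑ r, Q r = 1 ∧ (∀ r, Q r ≠ 0 → r.card = q) ∧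
      ∀ j, β * S j + (1 - β) * ∑ r ∈ univ.filter (fun r => j ∈ r), Q r = q / Fintype.card α := by
  have hβ1 : 0 < 1 - β := by linarith
  set t : α → ℝ := fun j => (q / Fintype.card α - β * S j) / (1 - β)
  have ht0 : ∀ j, 0 ≤ t j := fun j => div_nonneg (sub_nonneg.2 <|
    calc β * S j ≤ β * ((c + q) / Fintype.card α) := mul_le_mul_of_nonneg_left (hS j) hβ0
      _ ≤ q / Fintype.card α := by
        rw [← mul_div_assoc]
        exact div_le_div_of_nonneg_right hβc (Nat.cast_nonneg _)) hβ1.le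
  have ht1 : ∀ j, t j ≤ 1 := by
    intro j
    rw [div_le_one hβ1]
    rcases hsize with hq | hq
    · have : (q : ℝ) / Fintype.card α ≤ 1 := div_le_one_of_le₀ (by rw [hq]) (Nat.cast_nonneg _)
      rw [hS1 hq j]
      linarith
    · have : (q : ℝ) / Fintype.card α ≤ 1 / 2 :=
        div_le_of_le_mul₀ (Nat.cast_nonneg _) (by norm_num) (by
          have : ((2 * q : ℕ) : ℝ) ≤ Fintype.card α := Nat.cast_le.2 hq
          push_cast at this
          linarith)
      nlinarith [hS0 j]
  have hNq : (Fintype.card α * q / Fintype.card α : ℝ) = q := by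
    rcases eq_or_ne (Fintype.card α : ℝ) 0 with h | h
    · have : Fintype.card α = 0 := by exact_mod_cast h
      have : q = 0 := by omega
      simp [this]
    · exact mul_div_cancel_left₀ _ h
  have htsum : ∑ j, t j = q := by
    simp only [t, ← sum_div, sum_sub_distrib, ← mul_sum, hSsum, sum_const, card_univ, nsmul_eq_mul]
    rw [hNq, div_eq_iff hβ1.ne']
    ring
  obtain ⟨Q, hQ0, hQ1, hQcard, hQt⟩ := exists_weights_card_eq ht0 ht1 htsum
  refine ⟨Q, hQ0, hQ1, hQcard, fun j => ?_⟩
  rw [hQt, mul_div_cancel₀ _ hβ1.ne']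
  ring

end FiniteGround

/-- A nonadaptive decoder with private randomness `ω` drawn with probability `weight ω`; it
queries `query ω` and answers `b` on the received word `y` with probability `out ω y b`. -/
structure RandomizedDecoder (α Ω : Type*) [Fintype Ω] where
  weight : Ω → ℝ
  query : Ω → Finset α
  out : Ω → (α → Bool) → Bool → ℝ
  weight_nonneg : ∀ ω, 0 ≤ weight ω
  sum_weight : ∑ ω, weight ω = 1
  out_nonneg : ∀ ω y b, 0 ≤ out ω y b
  out_true_add_out_false : ∀ ω y, out ω y true + out ω y false = 1
  out_congr : ∀ ω, weight ω ≠ 0 → ∀ y y' : α → Bool, (∀ j ∈ query ω, y j = y' j) →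
    out ω y = out ω y'

namespace RandomizedDecoder

variable {α Ω : Type*} [Fintype Ω] (D : RandomizedDecoder α Ω)

noncomputable def success (y : α → Bool) (b : Bool) : ℝ := ∑ ω, D.weight ω * D.out ω y b

lemma out_le_one (ω : Ω) (y : α → Bool) (b : Bool) : D.out ω y b ≤ 1 := by
  have := D.out_true_add_out_false ω y
  cases b <;> linarith [D.out_nonneg ω y true, D.out_nonneg ω y false]

lemma success_true_add_success_false (y : α → Bool) :
    D.success y true + D.success y false = 1 := by
  simp only [success, ← sum_add_distrib, ← mul_add, out_true_add_out_false, mul_one, sum_weight]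

lemma success_le_one (y : α → Bool) (b : Bool) : D.success y b ≤ 1 :=
  calc D.success y b ≤ ∑ ω, D.weight ω * 1 :=
        sum_le_sum fun ω _ => mul_le_mul_of_nonneg_left (D.out_le_one ω y b) (D.weight_nonneg ω)
    _ = 1 := by simp [sum_weight]

section Constructions

variable [Fintype α]

noncomputable def pad (w : Ω → Finset α → ℝ)
    (hw : ∀ ω, D.weight ω ≠ 0 →
      (∀ r, 0 ≤ w ω r) ∧ ∑ r, w ω r = 1 ∧ ∀ r, w ω r ≠ 0 → D.query ω ⊆ r) :
    RandomizedDecoder α (Ω × Finset α) where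
  weight x := D.weight x.1 * w x.1 x.2
  query x := x.2
  out x := D.out x.1
  weight_nonneg x := by
    rcases eq_or_ne (D.weight x.1) 0 with h | h
    · simp [h]
    · exact mul_nonneg (D.weight_nonneg _) ((hw _ h).1 _)
  sum_weight := by
    rw [Fintype.sum_prod_type, ← D.sum_weight]
    refine sum_congr rfl fun ω _ => ?_
    rcases eq_or_ne (D.weight ω) 0 with h | h
    · simp [h]
    · rw [show ∑ r, D.weight ω * w ω r = _ from (mul_sum ..).symm, (hw ω h).2.1, mul_one]
  out_nonneg x := D.out_nonneg x.1
  out_true_add_out_false x := D.out_true_add_out_false x.1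
  out_congr x hx y y' hy := by
    obtain ⟨hD, hwx⟩ := mul_ne_zero_iff.1 hx
    exact D.out_congr x.1 hD y y' fun j hj => hy j ((hw _ hD).2.2 _ hwx hj)

noncomputable def mixCoin (β : ℝ) (Q : Finset α → ℝ) (hβ0 : 0 ≤ β) (hβ1 : β ≤ 1)
    (hQ0 : ∀ r, 0 ≤ Q r) (hQ1 : ∑ r, Q r = 1) : RandomizedDecoder α (Ω ⊕ Finset α) where
  weight := Sum.elim (fun ω => β * D.weight ω) (fun r => (1 - β) * Q r)
  query := Sum.elim D.query id
  out := Sum.elim D.out fun _ _ _ => 1 / 2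
  weight_nonneg
    | .inl ω => mul_nonneg hβ0 (D.weight_nonneg ω)
    | .inr r => mul_nonneg (sub_nonneg.2 hβ1) (hQ0 r)
  sum_weight := by simp [Fintype.sum_sum_type, ← mul_sum, D.sum_weight, hQ1]
  out_nonneg
    | .inl ω => D.out_nonneg ω
    | .inr _ => fun _ _ => by norm_num
  out_true_add_out_false
    | .inl ω => D.out_true_add_out_false ω
    | .inr _ => fun _ => by norm_num
  out_congr
    | .inl ω => fun h => D.out_congr ω (right_ne_zero_of_mul h)
    | .inr _ => fun _ _ _ _ => rfl

section Pad

variable {w : Ω → Finset α → ℝ} (hw : ∀ ω, D.weight ω ≠ 0 →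
  (∀ r, 0 ≤ w ω r) ∧ ∑ r, w ω r = 1 ∧ ∀ r, w ω r ≠ 0 → D.query ω ⊆ r)
include hw

lemma success_pad (y : α → Bool) (b : Bool) : (D.pad w hw).success y b = D.success y b := by
  simp only [success, pad, Fintype.sum_prod_type]
  refine sum_congr rfl fun ω _ => ?_
  rcases eq_or_ne (D.weight ω) 0 with h | h
  · simp [h]
  · simp only [← sum_mul, ← mul_sum, (hw ω h).2.1, mul_one]

end Pad

section MixCoin

variable {β : ℝ} {Q : Finset α → ℝ} (hβ0 : 0 ≤ β) (hβ1 : β ≤ 1) (hQ0 : ∀ r, 0 ≤ Q r)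
  (hQ1 : ∑ r, Q r = 1)

lemma success_mixCoin (y : α → Bool) (b : Bool) :
    (D.mixCoin β Q hβ0 hβ1 hQ0 hQ1).success y b = β * D.success y b + (1 - β) / 2 := by
  simp only [success, mixCoin, Fintype.sum_sum_type, Sum.elim_inl, Sum.elim_inr, mul_assoc,
    ← mul_sum, ← sum_mul, hQ1]
  ring

end MixCoin

end Constructions

variable [DecidableEq α]

noncomputable def queryProb (j : α) : ℝ :=
  ∑ ω ∈ univ.filter (fun ω => j ∈ D.query ω), D.weight ω

noncomputable def fiberOut (r : Finset α) (y : α → Bool) (b : Bool) : ℝ :=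
  pushWeights (fun ω => D.weight ω * D.out ω y b) D.query r

lemma fiberOut_nonneg (r : Finset α) (y : α → Bool) (b : Bool) : 0 ≤ D.fiberOut r y b :=
  pushWeights_nonneg _ (fun ω => mul_nonneg (D.weight_nonneg ω) (D.out_nonneg ω y b)) r

lemma fiberOut_true_add_fiberOut_false (r : Finset α) (y : α → Bool) :
    D.fiberOut r y true + D.fiberOut r y false = pushWeights D.weight D.query r := by
  simp only [fiberOut, pushWeights, ← sum_add_distrib, ← mul_add, out_true_add_out_false, mul_one]

lemma fiberOut_congr {r : Finset α} {y y' : α → Bool} (h : ∀ j ∈ r, y j = y' j) :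
    D.fiberOut r y = D.fiberOut r y' := by
  funext b
  refine sum_congr rfl fun ω hω => ?_
  rcases eq_or_ne (D.weight ω) 0 with h0 | h0
  · simp [h0]
  · show D.weight ω * D.out ω y b = D.weight ω * D.out ω y' b
    rw [D.out_congr ω h0 y y' fun j hj => h j ((mem_filter.1 hω).2 ▸ hj)]

variable [Fintype α]

lemma sum_queryProb : ∑ j, D.queryProb j = ∑ ω, D.weight ω * (D.query ω).card := by
  simp only [queryProb, sum_filter, mul_comm (D.weight _), card_eq_sum_ones, Nat.cast_sum,
    Nat.cast_one, sum_mul, one_mul]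
  rw [sum_comm]
  exact sum_congr rfl fun ω _ => by rw [← sum_filter]; simp

lemma success_sub_success_le (y y' : α → Bool) (b : Bool) :
    D.success y' b - D.success y b ≤ ∑ j ∈ univ.filter (fun j => y j ≠ y' j), D.queryProb j := by
  set Δ := univ.filter (fun j => y j ≠ y' j)
  have hω : ∀ ω, D.weight ω * (D.out ω y' b - D.out ω y b) ≤
      ∑ j ∈ Δ, if j ∈ D.query ω then D.weight ω else 0 := by
    intro ω
    by_cases hagree : ∀ j ∈ D.query ω, y j = y' j
    · rcases eq_or_ne (D.weight ω) 0 with h0 | h0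
      · simp [h0]
      · rw [D.out_congr ω h0 y y' hagree, sub_self, mul_zero]
        exact sum_nonneg fun j _ => by split_ifs <;> simp [D.weight_nonneg ω]
    · push Not at hagree
      obtain ⟨j, hjq, hj⟩ := hagree
      calc D.weight ω * (D.out ω y' b - D.out ω y b) ≤ D.weight ω * 1 :=
            mul_le_mul_of_nonneg_left (by linarith [D.out_le_one ω y' b, D.out_nonneg ω y b])
              (D.weight_nonneg ω)
        _ = if j ∈ D.query ω then D.weight ω else 0 := by rw [if_pos hjq, mul_one]
        _ ≤ _ := single_le_sum (f := fun j => if j ∈ D.query ω then D.weight ω else 0)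
            (fun j _ => by split_ifs <;> simp [D.weight_nonneg ω]) (by simpa [Δ] using hj)
  calc D.success y' b - D.success y b = ∑ ω, D.weight ω * (D.out ω y' b - D.out ω y b) := by
        simp only [success, ← sum_sub_distrib, mul_sub]
    _ ≤ ∑ ω, ∑ j ∈ Δ, if j ∈ D.query ω then D.weight ω else 0 := sum_le_sum fun ω _ => hω ω
    _ = ∑ j ∈ Δ, D.queryProb j := by rw [sum_comm]; simp only [queryProb, sum_filter]

theorem two_mul_le_of_queryProb_le {c ε : ℝ} (hc : 0 ≤ c)
    (hsmooth : ∀ j, D.queryProb j ≤ c / Fintype.card α) {y y' : α → Bool}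
    (h : 1 / 2 + ε ≤ D.success y true) (h' : 1 / 2 + ε ≤ D.success y' false) : 2 * ε ≤ c := by
  have hΔ : ∑ j ∈ univ.filter (fun j => y j ≠ y' j), D.queryProb j ≤ c :=
    calc _ ≤ ∑ _j : α, c / Fintype.card α :=
          sum_le_sum_of_subset_of_nonneg (filter_subset _ _) (fun j _ _ =>
            sum_nonneg fun ω _ => D.weight_nonneg ω) |>.trans (sum_le_sum fun j _ => hsmooth j)
      _ ≤ c := by
          rw [sum_const, card_univ, nsmul_eq_mul]
          rcases Nat.eq_zero_or_pos (Fintype.card α) with h0 | h0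
          · simp [h0, hc]
          · rw [mul_div_cancel₀ _ (by positivity)]
  linarith [D.success_sub_success_le y y' false, D.success_true_add_success_false y]

/-- Given its query set, the decoder answers with the conditional output distribution of `D`
(a fair coin on query sets of probability zero). -/
noncomputable def collapse : RandomizedDecoder α (Finset α) where
  weight := pushWeights D.weight D.query
  query := id
  out r y b := if pushWeights D.weight D.query r = 0 then 1 / 2
    else D.fiberOut r y b / pushWeights D.weight D.query r
  weight_nonneg := pushWeights_nonneg _ D.weight_nonneg
  sum_weight := by rw [sum_pushWeights, D.sum_weight]
  out_nonneg r y b := by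
    split_ifs
    · norm_num
    · exact div_nonneg (D.fiberOut_nonneg r y b) (pushWeights_nonneg _ D.weight_nonneg r)
  out_true_add_out_false r y := by
    split_ifs with h
    · norm_num
    · rw [← add_div, fiberOut_true_add_fiberOut_false, div_self h]
  out_congr r _ y y' h := by
    funext b
    rw [D.fiberOut_congr (r := r) h]

section Pad

variable {w : Ω → Finset α → ℝ} (hw : ∀ ω, D.weight ω ≠ 0 →
  (∀ r, 0 ≤ w ω r) ∧ ∑ r, w ω r = 1 ∧ ∀ r, w ω r ≠ 0 → D.query ω ⊆ r)
include hw

lemma queryProb_pad (j : α) :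
    (D.pad w hw).queryProb j = ∑ ω, D.weight ω * ∑ r ∈ univ.filter (fun r => j ∈ r), w ω r := by
  rw [queryProb, sum_filter]
  simp only [pad, Fintype.sum_prod_type, mul_sum, sum_filter, mul_ite, mul_zero]
  rfl

end Pad

section MixCoin

variable {β : ℝ} {Q : Finset α → ℝ} (hβ0 : 0 ≤ β) (hβ1 : β ≤ 1) (hQ0 : ∀ r, 0 ≤ Q r)
  (hQ1 : ∑ r, Q r = 1)

lemma queryProb_mixCoin (j : α) :
    (D.mixCoin β Q hβ0 hβ1 hQ0 hQ1).queryProb j =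
      β * D.queryProb j + (1 - β) * ∑ r ∈ univ.filter (fun r => j ∈ r), Q r := by
  rw [queryProb, sum_filter]
  simp only [queryProb, mixCoin, sum_filter, Fintype.sum_sum_type, Sum.elim_inl, Sum.elim_inr,
    id, mul_sum, mul_ite, mul_zero]
  rfl

end MixCoin

lemma pushWeights_mul_collapse_out (r : Finset α) (y : α → Bool) (b : Bool) :
    pushWeights D.weight D.query r * D.collapse.out r y b = D.fiberOut r y b := by
  simp only [collapse]
  split_ifs with h
  · have hsum := D.fiberOut_true_add_fiberOut_false r y
    rw [h] at hsum
    have := D.fiberOut_nonneg r y true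
    have := D.fiberOut_nonneg r y false
    cases b <;> simp only [h, zero_mul] <;> linarith
  · exact mul_div_cancel₀ _ h

lemma success_collapse (y : α → Bool) (b : Bool) : D.collapse.success y b = D.success y b := by
  simp only [success]
  rw [← sum_pushWeights D.query]
  exact sum_congr rfl fun r _ => D.pushWeights_mul_collapse_out r y b

lemma queryProb_collapse (j : α) : D.collapse.queryProb j = D.queryProb j :=
  sum_filter_pushWeights D.query (fun r => j ∈ r)

lemma collapse_out_congr (r : Finset α) {y y' : α → Bool} (h : ∀ j ∈ r, y j = y' j) :
    D.collapse.out r y = D.collapse.out r y' := by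
  funext b
  simp only [collapse, D.fiberOut_congr h]

lemma sum_queryProb_of_card_eq {q : ℕ} (hcard : ∀ ω, D.weight ω ≠ 0 → (D.query ω).card = q) :
    ∑ j, D.queryProb j = q := by
  rw [sum_queryProb, ← mul_one (q : ℝ), ← D.sum_weight, mul_sum]
  refine sum_congr rfl fun ω _ => ?_
  rcases eq_or_ne (D.weight ω) 0 with h | h
  · simp [h]
  · rw [hcard ω h, mul_comm]

lemma sum_mul_padProb_le {q : ℕ} (hqN : q ≤ Fintype.card α)
    (hcard : ∀ ω, D.weight ω ≠ 0 → (D.query ω).card ≤ q) (j : α) :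
    ∑ ω, D.weight ω * padProb q (D.query ω) j ≤ D.queryProb j + q / Fintype.card α :=
  calc ∑ ω, D.weight ω * padProb q (D.query ω) j
      ≤ ∑ ω, D.weight ω * ((if j ∈ D.query ω then 1 else 0) + q / Fintype.card α) := by
        refine sum_le_sum fun ω _ => ?_
        rcases eq_or_ne (D.weight ω) 0 with h | h
        · simp [h]
        · exact mul_le_mul_of_nonneg_left (padProb_le (hcard ω h) hqN j) (D.weight_nonneg ω)
    _ = D.queryProb j + q / Fintype.card α := by
        simp only [mul_add, sum_add_distrib, ← sum_mul, D.sum_weight, one_mul, mul_ite, mul_one,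
          mul_zero, queryProb, sum_filter]

theorem exists_pad_card_eq {q : ℕ} (hqN : q ≤ Fintype.card α)
    (hcard : ∀ ω, D.weight ω ≠ 0 → (D.query ω).card ≤ q) :
    ∃ D₁ : RandomizedDecoder α (Ω × Finset α),
      (∀ x, D₁.weight x ≠ 0 → (D₁.query x).card = q) ∧
      (∀ j, D₁.queryProb j = ∑ ω, D.weight ω * padProb q (D.query ω) j) ∧
      ∀ y b, D₁.success y b = D.success y b := by
  have hpad : ∀ ω, ∃ w : Finset α → ℝ, D.weight ω ≠ 0 → (∀ r, 0 ≤ w r) ∧ ∑ r, w r = 1 ∧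
      (∀ r, w r ≠ 0 → r.card = q ∧ D.query ω ⊆ r) ∧
      ∀ j, ∑ r ∈ univ.filter (fun r => j ∈ r), w r = padProb q (D.query ω) j := by
    intro ω
    by_cases h : D.weight ω = 0
    · exact ⟨0, fun h' => absurd h h'⟩
    · obtain ⟨w, hw⟩ := exists_padding (hcard ω h) hqN
      exact ⟨w, fun _ => hw⟩
  choose w hw using hpad
  have hw' : ∀ ω, D.weight ω ≠ 0 →
      (∀ r, 0 ≤ w ω r) ∧ ∑ r, w ω r = 1 ∧ ∀ r, w ω r ≠ 0 → D.query ω ⊆ r :=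
    fun ω h => ⟨(hw ω h).1, (hw ω h).2.1, fun r hr => ((hw ω h).2.2.1 r hr).2⟩
  refine ⟨D.pad w hw', fun x hx => ?_, fun j => ?_, D.success_pad hw'⟩
  · obtain ⟨hD, hwx⟩ := mul_ne_zero_iff.1 hx
    exact ((hw x.1 hD).2.2.1 x.2 hwx).1
  · rw [queryProb_pad]
    refine sum_congr rfl fun ω _ => ?_
    rcases eq_or_ne (D.weight ω) 0 with h | h
    · simp [h]
    · rw [(hw ω h).2.2.2 j]

theorem exists_uniform_queries {q : ℕ} {c β : ℝ}
    (hsize : q = Fintype.card α ∨ 2 * q ≤ Fintype.card α)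
    (hcard : ∀ ω, D.weight ω ≠ 0 → (D.query ω).card ≤ q)
    (hsmooth : ∀ j, D.queryProb j ≤ c / Fintype.card α)
    (hβ0 : 0 ≤ β) (hβ : β ≤ 1 / 2) (hβc : β * (c + q) ≤ q) :
    ∃ D' : RandomizedDecoder α (Finset α), (∀ r, D'.weight r ≠ 0 → r.card ≤ q) ∧
      (∀ j, ∑ r ∈ univ.filter (fun r => j ∈ r), D'.weight r = q / Fintype.card α) ∧
      (∀ r (y y' : α → Bool), (∀ j ∈ r, y j = y' j) → D'.out r y = D'.out r y') ∧
      ∀ y b, D'.success y b = β * D.success y b + (1 - β) / 2 := by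
  have hqN : q ≤ Fintype.card α := hsize.elim le_of_eq (by omega)
  obtain ⟨D₁, hD₁card, hD₁query, hD₁success⟩ := D.exists_pad_card_eq hqN hcard
  have hS0 : ∀ j, 0 ≤ D₁.queryProb j := fun j => sum_nonneg fun x _ => D₁.weight_nonneg x
  have hS : ∀ j, D₁.queryProb j ≤ (c + q) / Fintype.card α := fun j => by
    rw [hD₁query, add_div]
    linarith [D.sum_mul_padProb_le hqN hcard j, hsmooth j]
  have hS1 : q = Fintype.card α → ∀ j, D₁.queryProb j = 1 := by
    intro hq j
    simp only [hD₁query, padProb_of_eq_card hq, mul_one, D.sum_weight]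
  obtain ⟨Q, hQ0, hQ1, hQcard, hQ⟩ :=
    exists_weights_complement hsize hS0 hS (D₁.sum_queryProb_of_card_eq hD₁card) hS1 hβ0 hβ hβc
  set D₂ := D₁.mixCoin β Q hβ0 (by linarith) hQ0 hQ1
  refine ⟨D₂.collapse, fun r hr => ?_, fun j => ?_, D₂.collapse_out_congr,
    fun y b => by rw [success_collapse, success_mixCoin, hD₁success]⟩
  · obtain ⟨x, rfl, hx⟩ := exists_of_pushWeights_ne_zero _ hr
    rcases x with ω | r
    · exact (hD₁card ω (right_ne_zero_of_mul hx)).le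
    · exact (hQcard r (right_ne_zero_of_mul hx)).le
  · rw [← hQ j, ← queryProb_mixCoin, ← queryProb_collapse]
    rfl

theorem exists_uniform_of_smooth {q : ℕ} {c ε : ℝ} (hq : 0 < q)
    (hsize : q = Fintype.card α ∨ 2 * q ≤ Fintype.card α)
    (hcard : ∀ ω, D.weight ω ≠ 0 → (D.query ω).card ≤ q) (hc : 0 < c) (hε : 0 < ε)
    (hsmooth : ∀ j, D.queryProb j ≤ c / Fintype.card α) {y₁ y₂ : α → Bool}
    (h₁ : 1 / 2 + ε ≤ D.success y₁ true) (h₂ : 1 / 2 + ε ≤ D.success y₂ false) :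
    ∃ D' : RandomizedDecoder α (Finset α), (∀ r, D'.weight r ≠ 0 → r.card ≤ q) ∧
      (∀ j, ∑ r ∈ univ.filter (fun r => j ∈ r), D'.weight r = q / Fintype.card α) ∧
      (∀ r (y y' : α → Bool), (∀ j ∈ r, y j = y' j) → D'.out r y = D'.out r y') ∧
      ∀ y b, 1 / 2 + ε ≤ D.success y b → 1 / 2 + ε ^ 2 / (2 * c) ≤ D'.success y b := by
  have hεc : 2 * ε ≤ c := D.two_mul_le_of_queryProb_le hc.le hsmooth h₁ h₂
  have hε1 : ε ≤ 1 / 2 := by linarith [D.success_le_one y₁ true]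
  have hq1 : (1 : ℝ) ≤ q := by exact_mod_cast hq
  obtain ⟨D', hcard', hunif, hloc, hsucc⟩ := D.exists_uniform_queries (β := ε / (2 * c)) hsize
    hcard hsmooth (by positivity) (by rw [div_le_iff₀ (by positivity)]; linarith)
    (by rw [div_mul_eq_mul_div, div_le_iff₀ (by positivity)]; nlinarith)
  refine ⟨D', hcard', hunif, hloc, fun y b h => ?_⟩
  calc 1 / 2 + ε ^ 2 / (2 * c) = ε / (2 * c) * (1 / 2 + ε) + (1 - ε / (2 * c)) / 2 := by
        field_simp
        ring
    _ ≤ ε / (2 * c) * D.success y b + (1 - ε / (2 * c)) / 2 := by gcongr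
    _ = D'.success y b := (hsucc y b).symm

end RandomizedDecoder

lemma eq_or_two_mul_le_of_dvd {q m : ℕ} (hm : 0 < m) (hqm : q ∣ m) : q = m ∨ 2 * q ≤ m := by
  obtain ⟨k, rfl⟩ := hqm
  rcases k with _ | _ | k
  · omega
  · exact .inl (mul_one q).symm
  · exact .inr (by nlinarith)

/-- A (q,c,ε)-smooth code is a (q,q,ε²/(2c))-smooth code with
perfectly uniform queries (worst-case over all `x`), the key step towards
private information retrieval.  A decoder is modelled by: a distribution
`p i` over query sets `r` (of size at most `q`, each position queried with
probability at most `c/m`), and output probabilities `out i r y b =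
Pr[output = b]` depending only on the bits of the oracle `y` inside `r`;
success means `∑ r, p i r * out i r (C x) (x i) ≥ 1/2 + ε` for every `x, i`.
The conclusion asserts a new decoder `(p', out')` with query sets of size at
most `q`, each position queried with probability exactly `q/m`, and worst-case
success probability at least `1/2 + ε²/(2c)`. -/
theorem stmt17 (n m q : ℕ) (hq : 0 < q) (hm : 0 < m) (hqm : q ∣ m)
    (c ε : ℝ) (hc : 0 < c) (hε : 0 < ε)
    (C : (Fin n → Bool) → (Fin m → Bool))
    (p : Fin n → Finset (Fin m) → ℝ)
    (hp0 : ∀ i r, 0 ≤ p i r) (hp1 : ∀ i, ∑ r, p i r = 1)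
    (hpq : ∀ i r, p i r ≠ 0 → r.card ≤ q)
    (hsmooth : ∀ i (j : Fin m), ∑ r ∈ univ.filter (fun r => j ∈ r), p i r ≤ c / m)
    (out : Fin n → Finset (Fin m) → (Fin m → Bool) → Bool → ℝ)
    (hout0 : ∀ i r y b, 0 ≤ out i r y b)
    (houtsum : ∀ i r y, out i r y true + out i r y false = 1)
    (hloc : ∀ i r, ∀ y y' : Fin m → Bool, (∀ j ∈ r, y j = y' j) → out i r y = out i r y')
    (hsucc : ∀ x (i : Fin n), 1/2 + ε ≤ ∑ r, p i r * out i r (C x) (x i)) :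
    ∃ (p' : Fin n → Finset (Fin m) → ℝ)
      (out' : Fin n → Finset (Fin m) → (Fin m → Bool) → Bool → ℝ),
      (∀ i r, 0 ≤ p' i r) ∧ (∀ i, ∑ r, p' i r = 1) ∧
      (∀ i r, p' i r ≠ 0 → r.card ≤ q) ∧
      (∀ i (j : Fin m), ∑ r ∈ univ.filter (fun r => j ∈ r), p' i r = (q : ℝ) / m) ∧
      (∀ i r y b, 0 ≤ out' i r y b) ∧
      (∀ i r y, out' i r y true + out' i r y false = 1) ∧
      (∀ i r, ∀ y y' : Fin m → Bool, (∀ j ∈ r, y j = y' j) → out' i r y = out' i r y') ∧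
      (∀ x (i : Fin n), 1/2 + ε^2 / (2*c) ≤ ∑ r, p' i r * out' i r (C x) (x i)) := by
  let D (i : Fin n) : RandomizedDecoder (Fin m) (Finset (Fin m)) :=
    { weight := p i, query := id, out := out i, weight_nonneg := hp0 i, sum_weight := hp1 i,
      out_nonneg := hout0 i, out_true_add_out_false := houtsum i,
      out_congr := fun r _ => hloc i r }
  have hsize : q = Fintype.card (Fin m) ∨ 2 * q ≤ Fintype.card (Fin m) := by
    simpa using eq_or_two_mul_le_of_dvd hm hqm
  have hD (i : Fin n) := (D i).exists_uniform_of_smooth hq hsize (hpq i) hc hε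
    (fun j => by rw [Fintype.card_fin]; exact hsmooth i j)
    (y₁ := C fun _ => true) (y₂ := C (Function.update (fun _ => true) i false))
    (hsucc _ i) (by
      have h := hsucc (Function.update (fun _ => true) i false) i
      rwa [Function.update_self] at h)
  choose D' hcard hunif hloc' hsucc' using hD
  exact ⟨fun i => (D' i).weight, fun i => (D' i).out, fun i => (D' i).weight_nonneg,
    fun i => (D' i).sum_weight, hcard, fun i j => by simpa using hunif i j,
    fun i => (D' i).out_nonneg, fun i => (D' i).out_true_add_out_false, hloc',
    fun x i => hsucc' i (C x) (x i) (hsucc x i)⟩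
end
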